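/- arXiv:1302.0134 — 3 statements merged into one kernel-verified Lean document; each statement's English description precedes it below -/
import Mathlib

section
/- In the one-step setting, under Assumptions (V1), (V−) and (V+), there exists a function G(ω,x,y) on Ω×ℝ×ℝ^d such that: (i) for almost all ω, (x,y) ↦ G(ω,x,y) is continuous and nondecreasing in x; (ii) for all (x,y), ω ↦ G(ω,x,y) is 𝓗-measurable; (iii) for each 𝓗-measurable ℝ^d-valued ξ and each x∈ℝ, E(V(x+ξ·Y)|𝓗) exists, is finite, and equals G(ω,x,ξ(ω)) a.s.; in particular G(·,x,y) is a version of E(V(x+y·Y)|𝓗) for each fixed (x,y). -/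
open MeasureTheory Filter Set
open scoped ENNReal NNReal RealInnerProductSpace

noncomputable section

abbrev EE (d : ℕ) := EuclideanSpace ℝ (Fin d)

noncomputable def EReal.posE (x : EReal) : ℝ≥0∞ :=
  if x = ⊤ then ⊤ else ENNReal.ofReal x.toReal

namespace NonConcave

variable {Ω : Type*}

/-- Generalized conditional expectation of a nonnegative (extended-real-valued) random
variable: `E(W|m) := lim_n E(W ∧ n | m)` (realized as a supremum, with values in `[0,∞]`). -/
noncomputable def gceTop {m0 : MeasurableSpace Ω} (μ : Measure Ω) (m : MeasurableSpace Ω)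
    (W : Ω → ℝ≥0∞) (ω : Ω) : ℝ≥0∞ :=
  ⨆ n : ℕ, ENNReal.ofReal ((μ[fun ω' => (min (W ω') n).toReal | m]) ω)

/-- generalized conditional expectation of the positive part of an `EReal`-valued map. -/
noncomputable def gcePos {m0 : MeasurableSpace Ω} (μ : Measure Ω) (m : MeasurableSpace Ω)
    (Z : Ω → EReal) : Ω → ℝ≥0∞ :=
  gceTop μ m fun ω => (Z ω).posE

/-- generalized conditional expectation of the negative part of an `EReal`-valued map. -/
noncomputable def gceNeg {m0 : MeasurableSpace Ω} (μ : Measure Ω) (m : MeasurableSpace Ω)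
    (Z : Ω → EReal) : Ω → ℝ≥0∞ :=
  gceTop μ m fun ω => (-(Z ω)).posE

/-- Generalized conditional expectation `E(Z|m) := E(Z⁺|m) − E(Z⁻|m)`, `EReal`-valued. -/
noncomputable def gceE {m0 : MeasurableSpace Ω} (μ : Measure Ω) (m : MeasurableSpace Ω)
    (Z : Ω → EReal) (ω : Ω) : EReal :=
  (gcePos μ m Z ω : EReal) - (gceNeg μ m Z ω : EReal)

/-- conditional probability of an event -/
noncomputable def cprob {m0 : MeasurableSpace Ω} (μ : Measure Ω) (m : MeasurableSpace Ω)
    (A : Set Ω) : Ω → ℝ :=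
  μ[A.indicator fun _ => (1 : ℝ) | m]

/-- (generalized, possibly infinite) expectation of an `EReal`-valued random variable -/
noncomputable def expE {m0 : MeasurableSpace Ω} (μ : Measure Ω) (f : Ω → EReal) : EReal :=
  ((∫⁻ ω, (f ω).posE ∂μ : ℝ≥0∞) : EReal) - ((∫⁻ ω, (-(f ω)).posE ∂μ : ℝ≥0∞) : EReal)

/-- `g` is an essential supremum (in the a.s. order) of the family `f i`. -/
def IsEssSup {m0 : MeasurableSpace Ω} (μ : Measure Ω) {ι : Sort*}
    (f : ι → Ω → EReal) (g : Ω → EReal) : Prop :=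
  (∀ i, ∀ᵐ ω ∂μ, f i ω ≤ g ω) ∧
  ∀ h : Ω → EReal, (∀ i, ∀ᵐ ω ∂μ, f i ω ≤ h ω) → ∀ᵐ ω ∂μ, g ω ≤ h ω

/-- price increment -/
def deltaS {d : ℕ} (S : ℕ → Ω → EE d) (t : ℕ) (ω : Ω) : EE d := S t ω - S (t - 1) ω

/-- value process -/
def Vval {d : ℕ} (x : ℝ) (φ S : ℕ → Ω → EE d) (t : ℕ) (ω : Ω) : ℝ :=
  x + ∑ i ∈ Finset.Icc 1 t, ⟪φ i ω, deltaS S i ω⟫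

/-- predictable process (trading strategy) -/
def Predictable {d : ℕ} (F : ℕ → MeasurableSpace Ω) (T : ℕ) (φ : ℕ → Ω → EE d) : Prop :=
  ∀ t, 1 ≤ t → t ≤ T → Measurable[F (t - 1)] (φ t)

/-- no-arbitrage condition (NA) -/
def NA {d : ℕ} {m0 : MeasurableSpace Ω} (μ : Measure Ω) (F : ℕ → MeasurableSpace Ω)
    (S : ℕ → Ω → EE d) (T : ℕ) : Prop :=
  ∀ φ : ℕ → Ω → EE d, Predictable F T φ →
    (∀ᵐ ω ∂μ, 0 ≤ Vval 0 φ S T ω) → ∀ᵐ ω ∂μ, Vval 0 φ S T ω = 0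

/-- `ν` is a regular conditional distribution of `Y` given the σ-algebra `m`. -/
def IsCondDistrib {d : ℕ} {m0 : MeasurableSpace Ω} (μ : Measure Ω) (m : MeasurableSpace Ω)
    (Y : Ω → EE d) (ν : Ω → Measure (EE d)) : Prop :=
  (∀ ω, IsProbabilityMeasure (ν ω)) ∧
  ∀ B : Set (EE d), MeasurableSet B →
    Measurable[m] (fun ω => (ν ω B).toReal) ∧
    (fun ω => (ν ω B).toReal) =ᵐ[μ] cprob μ m {ω | Y ω ∈ B}

/-- `Dset` is the smallest affine subspace of full measure for `ρ` (equivalently, the smallest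
affine subspace containing the support of `ρ`). -/
def IsSmallestAffine {d : ℕ} (ρ : Measure (EE d)) (Dset : Set (EE d)) : Prop :=
  (∃ A : AffineSubspace ℝ (EE d), (A : Set (EE d)) = Dset) ∧ ρ Dset = 1 ∧
    ∀ A : AffineSubspace ℝ (EE d), ρ (A : Set (EE d)) = 1 → Dset ⊆ (A : Set (EE d))


/-- embedding of rational coordinate vectors into `EE d` -/
noncomputable def ratToE {d : ℕ} (q : Fin d → ℚ) : EE d :=
  (EuclideanSpace.equiv (Fin d) ℝ).symm fun i => (q i : ℝ)


section Aux
open ProbabilityTheory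


lemma posE_coe (a : ℝ) : (a : EReal).posE = ENNReal.ofReal a := by
  simp [EReal.posE]

lemma measurable_posE : Measurable EReal.posE := by
  unfold EReal.posE
  exact Measurable.ite (measurableSet_singleton ⊤) measurable_const
    (ENNReal.measurable_ofReal.comp (by measurability))

lemma posE_mono : Monotone EReal.posE := by
  intro x y hxy
  unfold EReal.posE
  by_cases hy : y = ⊤
  · rw [hy, if_pos rfl]; exact le_top
  · have hx : x ≠ ⊤ := fun h => hy (top_le_iff.mp (h ▸ hxy))
    rw [if_neg hx, if_neg hy]
    by_cases hxb : x = ⊥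
    · simp [hxb]
    · exact ENNReal.ofReal_le_ofReal (EReal.toReal_le_toReal hxy hxb hy)

/-- right regularization from rational values, `EReal`-valued for measurability -/
noncomputable def reg (f : ℚ → ℝ) (t : ℝ) : EReal :=
  ⨅ r : ℚ, if t < (r : ℝ) then ((f r : ℝ) : EReal) else ⊤

lemma reg_mono (f : ℚ → ℝ) : Monotone (reg f) := by
  intro t t' h
  refine iInf_mono fun r => ?_
  by_cases h2 : t' < (r : ℝ)
  · rw [if_pos h2, if_pos (h.trans_lt h2)]
  · rw [if_neg h2]; exact le_top

lemma reg_le_coe (f : ℚ → ℝ) {t : ℝ} {s : ℚ} (h : t < (s : ℝ)) : reg f t ≤ ((f s : ℝ) : EReal) :=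
  (iInf_le _ s).trans_eq (if_pos h)

lemma coe_le_reg {f : ℚ → ℝ} (hf : Monotone f) {t : ℝ} {r₀ : ℚ} (h : (r₀ : ℝ) ≤ t) :
    ((f r₀ : ℝ) : EReal) ≤ reg f t := by
  refine le_iInf fun r => ?_
  by_cases h2 : t < (r : ℝ)
  · rw [if_pos h2]
    exact EReal.coe_le_coe_iff.mpr (hf (le_of_lt (Rat.cast_lt.mp (h.trans_lt h2))))
  · rw [if_neg h2]; exact le_top

lemma reg_ne_top (f : ℚ → ℝ) (t : ℝ) : reg f t ≠ ⊤ := by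
  obtain ⟨s, hs⟩ := exists_rat_gt t
  exact ne_top_of_le_ne_top (EReal.coe_ne_top _) (reg_le_coe f hs)

lemma reg_ne_bot {f : ℚ → ℝ} (hf : Monotone f) (t : ℝ) : reg f t ≠ ⊥ := by
  obtain ⟨r₀, h⟩ := exists_rat_lt t
  exact fun hb => (EReal.coe_ne_bot (f r₀)) (le_bot_iff.mp (hb ▸ coe_le_reg hf h.le))

noncomputable def regR (f : ℚ → ℝ) (t : ℝ) : ℝ := (reg f t).toReal

lemma reg_eq_coe_regR {f : ℚ → ℝ} (hf : Monotone f) (t : ℝ) :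
    reg f t = ((regR f t : ℝ) : EReal) :=
  (EReal.coe_toReal (reg_ne_top f t) (reg_ne_bot hf t)).symm

lemma regR_mono {f : ℚ → ℝ} (hf : Monotone f) : Monotone (regR f) := fun t t' h =>
  EReal.toReal_le_toReal (reg_mono f h) (reg_ne_bot hf t) (reg_ne_top f t')

lemma regR_le {f : ℚ → ℝ} (hf : Monotone f) {t : ℝ} {s : ℚ} (h : t < (s : ℝ)) :
    regR f t ≤ f s := by
  have := reg_le_coe f (s := s) h
  rw [reg_eq_coe_regR hf] at this
  exact EReal.coe_le_coe_iff.mp this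

lemma le_regR {f : ℚ → ℝ} (hf : Monotone f) {t : ℝ} {r₀ : ℚ} (h : (r₀ : ℝ) ≤ t) :
    f r₀ ≤ regR f t := by
  have := coe_le_reg hf (t := t) h
  rw [reg_eq_coe_regR hf] at this
  exact EReal.coe_le_coe_iff.mp this

lemma reg_restrict {V : ℝ → ℝ} (hV : Monotone V) (hVc : Continuous V) (t : ℝ) :
    reg (fun r : ℚ => V r) t = ((V t : ℝ) : EReal) := by
  have hmq : Monotone fun r : ℚ => V (r : ℝ) := fun a b h => hV (by exact_mod_cast h)
  refine le_antisymm ?_ ?_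
  · -- reg ≤ V t, via: regR ≤ V t + ε
    rw [reg_eq_coe_regR hmq, EReal.coe_le_coe_iff]
    by_contra hlt
    push_neg at hlt
    set ε := (regR (fun r : ℚ => V r) t - V t) / 2 with hε
    have hε0 : 0 < ε := by simp [hε]; linarith
    obtain ⟨δ, hδ0, hδ⟩ := Metric.continuous_iff.mp hVc t ε hε0
    obtain ⟨s, hs1, hs2⟩ := exists_rat_btwn (lt_add_of_pos_right t hδ0)
    have h1 : regR (fun r : ℚ => V r) t ≤ V s := regR_le hmq hs1
    have h2 : dist (V (s : ℝ)) (V t) < ε := hδ _ (by rw [Real.dist_eq]; rw [abs_of_pos] <;> linarith)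
    rw [Real.dist_eq, abs_lt] at h2
    have : regR (fun r : ℚ => V r) t < V t + ε := lt_of_le_of_lt h1 (by linarith)
    rw [hε] at this; linarith
  · -- V t ≤ reg
    refine le_iInf fun r => ?_
    by_cases h2 : t < (r : ℝ)
    · rw [if_pos h2]; exact EReal.coe_le_coe_iff.mpr (hV h2.le)
    · rw [if_neg h2]; exact le_top




/-- monotone rational functions with locally uniformly controlled oscillation -/
def goodSet : Set (ℚ → ℝ) :=
  {f | Monotone f ∧ ∀ a b : ℚ, ∀ n : ℕ, ∃ m : ℕ, ∀ r s : ℚ,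
    a ≤ r → r ≤ s → s ≤ b → (s : ℝ) - (r : ℝ) ≤ 1 / (m + 1) → f s - f r ≤ 1 / (n + 1)}

lemma measurableSet_goodSet : MeasurableSet (goodSet) := by
  have h1 : MeasurableSet {f : ℚ → ℝ | Monotone f} := by
    have : {f : ℚ → ℝ | Monotone f} = ⋂ (p : ℚ) (q : ℚ) (_ : p ≤ q), {f | f p ≤ f q} := by
      ext f
      simp only [Set.mem_setOf_eq, Set.mem_iInter]
      exact ⟨fun h p q hpq => h hpq, fun h a b hab => h a b hab⟩
    rw [this]
    exact MeasurableSet.iInter fun p => MeasurableSet.iInter fun q => MeasurableSet.iInter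
      fun _ => measurableSet_le (measurable_pi_apply p) (measurable_pi_apply q)
  have h2 : MeasurableSet {f : ℚ → ℝ | ∀ a b : ℚ, ∀ n : ℕ, ∃ m : ℕ, ∀ r s : ℚ,
      a ≤ r → r ≤ s → s ≤ b → (s : ℝ) - (r : ℝ) ≤ 1 / (m + 1) → f s - f r ≤ 1 / (n + 1)} := by
    have : {f : ℚ → ℝ | ∀ a b : ℚ, ∀ n : ℕ, ∃ m : ℕ, ∀ r s : ℚ,
        a ≤ r → r ≤ s → s ≤ b → (s : ℝ) - (r : ℝ) ≤ 1 / (m + 1) → f s - f r ≤ 1 / (n + 1)} =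
        ⋂ (a : ℚ) (b : ℚ) (n : ℕ), ⋃ (m : ℕ), ⋂ (r : ℚ) (s : ℚ) (_ : a ≤ r) (_ : r ≤ s)
          (_ : s ≤ b) (_ : (s : ℝ) - (r : ℝ) ≤ 1 / (m + 1)), {f : ℚ → ℝ | f s - f r ≤ 1 / ((n : ℝ) + 1)} := by
      ext f
      simp only [Set.mem_setOf_eq, Set.mem_iInter, Set.mem_iUnion]
    rw [this]
    refine MeasurableSet.iInter fun a => MeasurableSet.iInter fun b =>
      MeasurableSet.iInter fun n => MeasurableSet.iUnion fun m =>
      MeasurableSet.iInter fun r => MeasurableSet.iInter fun s =>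
      MeasurableSet.iInter fun _ => MeasurableSet.iInter fun _ =>
      MeasurableSet.iInter fun _ => MeasurableSet.iInter fun _ => ?_
    exact measurableSet_le ((measurable_pi_apply s).sub (measurable_pi_apply r)) measurable_const
  have : goodSet = {f : ℚ → ℝ | Monotone f} ∩ _ := rfl
  exact h1.inter h2

lemma mem_goodSet_of_continuous {V : ℝ → ℝ} (hV : Monotone V) (hVc : Continuous V) :
    (fun r : ℚ => V r) ∈ goodSet := by
  constructor
  · exact fun a b h => hV (by exact_mod_cast h)
  · intro a b n
    have hcomp : IsCompact (Set.Icc (a : ℝ) b) := isCompact_Icc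
    have huc : UniformContinuousOn V (Set.Icc (a : ℝ) b) :=
      hcomp.uniformContinuousOn_of_continuous hVc.continuousOn
    have hε : (0 : ℝ) < 1 / (n + 1) := by positivity
    obtain ⟨δ, hδ0, hδ⟩ := Metric.uniformContinuousOn_iff.mp huc _ hε
    obtain ⟨m, hm⟩ := exists_nat_one_div_lt hδ0
    refine ⟨m, fun r s h1 h2 h3 h4 => ?_⟩
    have hr : (r : ℝ) ∈ Set.Icc (a : ℝ) b := ⟨by exact_mod_cast h1, by exact_mod_cast h2.trans h3⟩
    have hs : (s : ℝ) ∈ Set.Icc (a : ℝ) b := ⟨by exact_mod_cast h1.trans h2, by exact_mod_cast h3⟩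
    have hd : dist (s : ℝ) (r : ℝ) < δ := by
      rw [Real.dist_eq, abs_of_nonneg (by exact_mod_cast sub_nonneg.mpr h2)]
      calc (s : ℝ) - r ≤ 1 / (m + 1) := h4
        _ < δ := hm
    have := hδ _ hs _ hr hd
    rw [Real.dist_eq, abs_lt] at this
    linarith [this.2]


lemma goodSet_continuous {f : ℚ → ℝ} (hf : f ∈ goodSet) : Continuous (regR f) := by
  obtain ⟨hmono, hgood⟩ := hf
  rw [Metric.continuous_iff]
  intro t ε hε
  obtain ⟨a, ha⟩ := exists_rat_lt (t - 2)
  obtain ⟨b, hb⟩ := exists_rat_gt (t + 2)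
  obtain ⟨n, hn⟩ := exists_nat_one_div_lt hε
  obtain ⟨m, hm⟩ := hgood a b n
  set δ : ℝ := 1 / (4 * (m + 1)) with hδdef
  have hm1 : (0:ℝ) < m + 1 := by positivity
  have hδ0 : 0 < δ := by positivity
  have hδ4 : 4 * δ = 1 / (m + 1) := by rw [hδdef]; field_simp
  have hδ1 : δ ≤ 1 / 4 := by
    rw [hδdef]
    rw [div_le_div_iff₀ (by positivity) (by norm_num)]
    nlinarith
  refine ⟨δ, hδ0, fun u hu => ?_⟩
  obtain ⟨r₀, hr₀1, hr₀2⟩ := exists_rat_btwn (show t - 2*δ < t - δ by linarith)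
  obtain ⟨s₀, hs₀1, hs₀2⟩ := exists_rat_btwn (show t + δ < t + 2*δ by linarith)
  have key : f s₀ - f r₀ ≤ 1 / (n + 1) := by
    refine hm r₀ s₀ ?_ ?_ ?_ ?_
    · exact_mod_cast (show (a:ℝ) ≤ r₀ by linarith)
    · exact_mod_cast (show (r₀:ℝ) ≤ s₀ by linarith)
    · exact_mod_cast (show (s₀:ℝ) ≤ b by linarith)
    · linarith
  have hb1 : regR f (t + δ) ≤ f s₀ := regR_le hmono hs₀1
  have hb2 : f r₀ ≤ regR f (t - δ) := le_regR hmono hr₀2.le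
  have hmon := regR_mono hmono
  rw [Real.dist_eq, abs_lt] at hu
  have hu1 : regR f u ≤ f s₀ := (hmon (show u ≤ t + δ by linarith)).trans hb1
  have hu2 : f r₀ ≤ regR f u := hb2.trans (hmon (show t - δ ≤ u by linarith))
  have ht1 : regR f t ≤ f s₀ := (hmon (show t ≤ t + δ by linarith)).trans hb1
  have ht2 : f r₀ ≤ regR f t := hb2.trans (hmon (show t - δ ≤ t by linarith))
  rw [Real.dist_eq, abs_lt]
  constructor <;> linarith


lemma measurable_reg {γ : Type*} [MeasurableSpace γ] {u : γ → ℚ → ℝ} {v : γ → ℝ}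
    (hu : Measurable u) (hv : Measurable v) : Measurable fun c => reg (u c) (v c) := by
  show Measurable fun c => ⨅ r : ℚ, if v c < (r : ℝ) then ((u c r : ℝ) : EReal) else ⊤
  refine Measurable.iInf fun r => ?_
  refine Measurable.ite (measurableSet_lt hv measurable_const) ?_ measurable_const
  exact measurable_coe_real_ereal.comp ((measurable_pi_apply r).comp hu)

lemma coe_ennreal_eq {a : ℝ≥0∞} (ha : a ≠ ⊤) : (a : EReal) = ((a.toReal : ℝ) : EReal) := by
  rw [← EReal.toReal_coe_ennreal]
  exact (EReal.coe_toReal (fun h => ha (EReal.coe_ennreal_eq_top_iff.mp h))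
    (EReal.coe_ennreal_ne_bot a)).symm

variable {E : Type*}


lemma iSup_min_natCast (a : ℝ≥0∞) : ⨆ n : ℕ, min a (n : ℝ≥0∞) = a := by
  refine le_antisymm (iSup_le fun n => min_le_left _ _) ?_
  by_cases ha : a = ⊤
  · subst ha
    rw [top_le_iff]
    have h2 : (⨆ n : ℕ, min (⊤ : ℝ≥0∞) (n : ℝ≥0∞)) = ⨆ n : ℕ, (n : ℝ≥0∞) :=
      iSup_congr fun n => min_eq_right le_top
    rw [h2, ENNReal.iSup_natCast]
  · obtain ⟨n, hn⟩ := ENNReal.exists_nat_gt ha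
    exact le_trans (le_of_eq (min_eq_left hn.le).symm)
      (le_iSup (fun n : ℕ => min a (n : ℝ≥0∞)) n)

lemma gceTop_congr {m0 : MeasurableSpace Ω} {μ : Measure Ω} (m : MeasurableSpace Ω)
    {W₁ W₂ : Ω → ℝ≥0∞} (h : W₁ =ᵐ[μ] W₂) : gceTop μ m W₁ =ᵐ[μ] gceTop μ m W₂ := by
  have hn : ∀ n : ℕ, μ[fun ω' => (min (W₁ ω') n).toReal|m]
      =ᵐ[μ] μ[fun ω' => (min (W₂ ω') n).toReal|m] :=
    fun n => condExp_congr_ae (by filter_upwards [h] with ω hω; rw [hω])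
  filter_upwards [ae_all_iff.mpr hn] with ω hω
  exact iSup_congr fun n => by rw [hω n]

lemma masterL [MeasurableSpace E] [StandardBorelSpace E] [Nonempty E]
    {m0 : MeasurableSpace Ω} (μ : Measure Ω) [IsProbabilityMeasure μ]
    (m : MeasurableSpace Ω) (hm : m ≤ m0)
    {W : Ω → E} (hW : @Measurable Ω E m0 _ W)
    (w : Ω → E → ℝ≥0∞)
    (hw : Measurable[MeasurableSpace.prod m (inferInstance : MeasurableSpace E)]
      (Function.uncurry w)) :
    gceTop μ m (fun ω => w ω (W ω)) =ᵐ[μ]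
      fun ω => ∫⁻ p, w ω p ∂(@condDistrib Ω Ω E _ _ _ m0 m W id μ _ ω) := by
  set κ := @condDistrib Ω Ω E _ _ _ m0 m W id μ _ with hκ
  have hX : @Measurable Ω Ω m0 m id := measurable_id'' hm
  have hsec : ∀ ω, Measurable fun p => w ω p := fun ω => hw.of_uncurry_left
  have key : ∀ n : ℕ, μ[fun ω' => (min (w ω' (W ω')) (n : ℝ≥0∞)).toReal | m] =ᵐ[μ]
      fun ω => ∫ p, (min (w ω p) (n : ℝ≥0∞)).toReal ∂κ ω := by
    intro n
    have hfm : Measurable[MeasurableSpace.prod m inferInstance]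
        fun q : Ω × E => (min (Function.uncurry w q) (n : ℝ≥0∞)).toReal :=
      (hw.min measurable_const).ennreal_toReal
    have hint : Integrable (fun a => (min (w a (W a)) (n : ℝ≥0∞)).toReal) μ := by
      refine Integrable.mono' (integrable_const (n : ℝ)) ?_ ?_
      · have h1 : @Measurable Ω (Ω × E) m0 (MeasurableSpace.prod m inferInstance)
            (fun a => (a, W a)) := Measurable.prodMk (measurable_id'' hm) hW
        exact (hfm.comp h1).aestronglyMeasurable
      · refine Eventually.of_forall fun a => ?_
        rw [Real.norm_eq_abs, abs_of_nonneg ENNReal.toReal_nonneg]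
        calc (min (w a (W a)) (n : ℝ≥0∞)).toReal
            ≤ ((n : ℝ≥0∞)).toReal :=
              ENNReal.toReal_mono (ENNReal.natCast_ne_top n) (min_le_right _ _)
          _ = (n : ℝ) := by simp
    have h := condExp_prod_ae_eq_integral_condDistrib (mβ := m) (X := id) (Y := W)
      hX hW.aemeasurable hfm.stronglyMeasurable hint
    rw [MeasurableSpace.comap_id] at h
    exact h
  filter_upwards [ae_all_iff.mpr key] with ω hω
  unfold gceTop
  have heq : ∀ n : ℕ, ENNReal.ofReal ((μ[fun ω' => (min (w ω' (W ω')) (n : ℝ≥0∞)).toReal|m]) ω)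
      = ∫⁻ p, min (w ω p) (n : ℝ≥0∞) ∂κ ω := by
    intro n
    rw [hω n]
    have hsm : Measurable fun p => min (w ω p) (n : ℝ≥0∞) := (hsec ω).min measurable_const
    rw [integral_toReal hsm.aemeasurable (Eventually.of_forall fun p =>
      lt_of_le_of_lt (min_le_right _ _) (ENNReal.natCast_lt_top n))]
    rw [ENNReal.ofReal_toReal]
    refine ne_top_of_le_ne_top
      (ENNReal.mul_ne_top (ENNReal.natCast_ne_top n) (measure_ne_top (κ ω) univ)) ?_
    calc ∫⁻ p, min (w ω p) (n : ℝ≥0∞) ∂κ ω ≤ ∫⁻ _, (n : ℝ≥0∞) ∂κ ω :=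
          lintegral_mono fun p => min_le_right _ _
      _ = (n : ℝ≥0∞) * κ ω univ := lintegral_const (μ := κ ω) _
  simp_rw [heq]
  rw [← lintegral_iSup (fun n => (hsec ω).min measurable_const)
    (fun i j hij p => min_le_min le_rfl (Nat.cast_le.mpr hij))]
  exact lintegral_congr fun p => iSup_min_natCast _

lemma kernel_ae_one [MeasurableSpace E] [StandardBorelSpace E] [Nonempty E]
    {m0 : MeasurableSpace Ω} (μ : Measure Ω) [IsProbabilityMeasure μ]
    (m : MeasurableSpace Ω) (hm : m ≤ m0)
    {W : Ω → E} (hW : @Measurable Ω E m0 _ W) {S : Set E} (hS : MeasurableSet S)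
    (h1 : μ (W ⁻¹' S) = 1) :
    ∀ᵐ ω ∂μ, (@condDistrib Ω Ω E _ _ _ m0 m W id μ _ ω) S = 1 := by
  have hX : @Measurable Ω Ω m0 m id := measurable_id'' hm
  set κ := @condDistrib Ω Ω E _ _ _ m0 m W id μ _ with hκ
  have h0 : ∫⁻ a, κ a Sᶜ ∂μ = 0 := by
    have h := setLIntegral_preimage_condDistrib (mβ := m) (X := id) (Y := W) (μ := μ)
      hX hW.aemeasurable hS.compl MeasurableSet.univ
    rw [preimage_univ, Measure.restrict_univ, univ_inter] at h
    simp only [id_eq] at h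
    rw [← hκ] at h
    rw [h, preimage_compl, measure_compl (hW hS) (measure_ne_top _ _), h1]
    simp
  have hmeas : @Measurable Ω ℝ≥0∞ m0 _ fun a => κ a Sᶜ :=
    (Kernel.measurable_coe κ hS.compl).mono hm le_rfl
  have hae := (lintegral_eq_zero_iff hmeas).mp h0
  filter_upwards [hae] with ω hω
  have : IsProbabilityMeasure (κ ω) := IsMarkovKernel.isProbabilityMeasure ω
  have h2 : κ ω Sᶜ = 0 := hω
  rwa [prob_compl_eq_zero_iff hS] at h2


end Aux

open scoped Topology

set_option maxHeartbeats 2000000 in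
/-- Lemma `candycontinue`: existence of a jointly continuous (in `(x,y)`),
nondecreasing-in-`x` version `G(ω,x,y)` of `E(V(x+y·Y)|𝓗)`, which also computes
`E(V(x+ξ·Y)|𝓗)` at any `𝓗`-measurable `ξ`. -/
theorem stmt_10
    {d : ℕ} (m : MeasurableSpace Ω) {m0 : MeasurableSpace Ω} (μ : Measure Ω) [IsProbabilityMeasure μ]
    (hm : m ≤ m0)
    (hnull : ∀ s : Set Ω, μ s = 0 → MeasurableSet[m] s)
    (Y : Ω → EE d) (hY : Measurable Y)
    (V : Ω → ℝ → ℝ)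
    (hV1 : ∀ᵐ ω ∂μ, Monotone (V ω) ∧ Continuous (V ω))
    (hVmeas : ∀ x : ℝ, Measurable fun ω => V ω x)
    (hVminus : ∀ x y : ℝ, ∀ᵐ ω ∂μ,
      gceNeg μ m (fun ω' => ((V ω' (x - |y| * ‖Y ω'‖) : ℝ) : EReal)) ω < ⊤)
    (hVplus : ∀ x y : ℝ, ∀ᵐ ω ∂μ,
      gcePos μ m (fun ω' => ((V ω' (x + |y| * ‖Y ω'‖) : ℝ) : EReal)) ω < ⊤) :
    ∃ G : Ω → ℝ → EE d → ℝ,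
      (∀ᵐ ω ∂μ, Continuous (fun p : ℝ × EE d => G ω p.1 p.2) ∧
        ∀ y : EE d, Monotone fun x => G ω x y) ∧
      (∀ (x : ℝ) (y : EE d), Measurable[m] fun ω => G ω x y) ∧
      (∀ (x : ℝ) (ξ : Ω → EE d), Measurable[m] ξ →
        ∀ᵐ ω ∂μ,
          gcePos μ m (fun ω' => ((V ω' (x + ⟪ξ ω', Y ω'⟫) : ℝ) : EReal)) ω < ⊤ ∧
          gceNeg μ m (fun ω' => ((V ω' (x + ⟪ξ ω', Y ω'⟫) : ℝ) : EReal)) ω < ⊤ ∧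
          gceE μ m (fun ω' => ((V ω' (x + ⟪ξ ω', Y ω'⟫) : ℝ) : EReal)) ω
            = ((G ω x (ξ ω) : ℝ) : EReal)) := by
  classical
  set W : Ω → (ℚ → ℝ) × EE d := fun ω => (fun r : ℚ => V ω (r : ℝ), Y ω) with hWdef
  have hW : @Measurable Ω ((ℚ → ℝ) × EE d) m0 _ W := by
    rw [hWdef]
    exact Measurable.mono (Measurable.prodMk
      (measurable_pi_lambda (fun ω (r : ℚ) => V ω (r : ℝ)) fun r => hVmeas (r : ℝ)) hY) le_rfl le_rfl
  set κ := @ProbabilityTheory.condDistrib Ω Ω ((ℚ → ℝ) × EE d) _ _ _ m0 m W id μ _ with hκdef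
  set Φ : ℝ → EE d → (ℚ → ℝ) × EE d → EReal :=
    fun x y p => reg p.1 (x + ⟪y, p.2⟫) with hΦdef
  have mΦ2 : ∀ (x : ℝ) (y : EE d), Measurable fun p : (ℚ → ℝ) × EE d => Φ x y p :=
    fun x y => measurable_reg measurable_fst
      (measurable_const.add (measurable_const.inner measurable_snd))
  have mΦp : ∀ x : ℝ, Measurable fun q : EE d × ((ℚ → ℝ) × EE d) => Φ x q.1 q.2 :=
    fun x => measurable_reg (measurable_fst.comp measurable_snd)
      (measurable_const.add (measurable_fst.inner (measurable_snd.comp measurable_snd)))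
  have mA : ∀ n : ℕ, Measurable fun p : (ℚ → ℝ) × EE d =>
      (reg p.1 ((n : ℝ) + (n : ℝ) * ‖p.2‖)).posE :=
    fun n => measurable_posE.comp (measurable_reg measurable_fst
      (measurable_const.add (measurable_const.mul measurable_snd.norm)))
  have mB : ∀ n : ℕ, Measurable fun p : (ℚ → ℝ) × EE d =>
      (-(reg p.1 (-(n : ℝ) - (n : ℝ) * ‖p.2‖))).posE :=
    fun n => measurable_posE.comp ((measurable_reg measurable_fst
      (measurable_const.sub (measurable_const.mul measurable_snd.norm))).neg)
  -- a.s. the kernel is concentrated on good coded functions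
  have hgood1 : ∀ᵐ ω ∂μ, κ ω (goodSet ×ˢ (univ : Set (EE d))) = 1 := by
    refine kernel_ae_one μ m hm hW (measurableSet_goodSet.prod MeasurableSet.univ) ?_
    have hmem : ∀ᵐ ω ∂μ, W ω ∈ goodSet ×ˢ (univ : Set (EE d)) := by
      filter_upwards [hV1] with ω hω
      exact ⟨mem_goodSet_of_continuous hω.1 hω.2, mem_univ _⟩
    have h0 : μ ((W ⁻¹' (goodSet ×ˢ (univ : Set (EE d))))ᶜ) = 0 := ae_iff.mp hmem
    exact (prob_compl_eq_zero_iff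
      (hW (measurableSet_goodSet.prod MeasurableSet.univ))).mp h0
  -- a.s. finiteness of the dominating integrals
  have hfin : ∀ n : ℕ, ∀ᵐ ω ∂μ,
      (∫⁻ p, (reg p.1 ((n : ℝ) + (n : ℝ) * ‖p.2‖)).posE ∂κ ω < ⊤) ∧
      (∫⁻ p, (-(reg p.1 (-(n : ℝ) - (n : ℝ) * ‖p.2‖))).posE ∂κ ω < ⊤) := by
    intro n
    have hLA := masterL μ m hm hW
      (fun _ p => (reg p.1 ((n : ℝ) + (n : ℝ) * ‖p.2‖)).posE)
      ((mA n).comp (@measurable_snd Ω _ m _))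
    have hLB := masterL μ m hm hW
      (fun _ p => (-(reg p.1 (-(n : ℝ) - (n : ℝ) * ‖p.2‖))).posE)
      ((mB n).comp (@measurable_snd Ω _ m _))
    have hcongA : (fun ω => (reg (W ω).1 ((n : ℝ) + (n : ℝ) * ‖(W ω).2‖)).posE) =ᵐ[μ]
        (fun ω => (((V ω ((n : ℝ) + |(n : ℝ)| * ‖Y ω‖) : ℝ) : EReal)).posE) := by
      filter_upwards [hV1] with ω hω
      show (reg (fun r : ℚ => V ω (r : ℝ)) ((n : ℝ) + (n : ℝ) * ‖Y ω‖)).posE = _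
      rw [reg_restrict hω.1 hω.2, abs_of_nonneg (Nat.cast_nonneg n : (0:ℝ) ≤ n)]
    have hcongB : (fun ω => (-(reg (W ω).1 (-(n : ℝ) - (n : ℝ) * ‖(W ω).2‖))).posE) =ᵐ[μ]
        (fun ω => (-((V ω (-(n : ℝ) - |(n : ℝ)| * ‖Y ω‖) : ℝ) : EReal)).posE) := by
      filter_upwards [hV1] with ω hω
      show (-(reg (fun r : ℚ => V ω (r : ℝ)) (-(n : ℝ) - (n : ℝ) * ‖Y ω‖))).posE = _
      rw [reg_restrict hω.1 hω.2, abs_of_nonneg (Nat.cast_nonneg n : (0:ℝ) ≤ n)]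
    have hA : gcePos μ m (fun ω' => ((V ω' ((n : ℝ) + |(n : ℝ)| * ‖Y ω'‖) : ℝ) : EReal))
        =ᵐ[μ] fun ω => ∫⁻ p, (reg p.1 ((n : ℝ) + (n : ℝ) * ‖p.2‖)).posE ∂κ ω :=
      (gceTop_congr m hcongA.symm).trans hLA
    have hB : gceNeg μ m (fun ω' => ((V ω' (-(n : ℝ) - |(n : ℝ)| * ‖Y ω'‖) : ℝ) : EReal))
        =ᵐ[μ] fun ω => ∫⁻ p, (-(reg p.1 (-(n : ℝ) - (n : ℝ) * ‖p.2‖))).posE ∂κ ω :=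
      (gceTop_congr m hcongB.symm).trans hLB
    filter_upwards [hVplus (n : ℝ) (n : ℝ), hVminus (-(n : ℝ)) (n : ℝ), hA, hB]
      with ω h1 h2 h3 h4
    exact ⟨h3 ▸ h1, h4 ▸ h2⟩
  -- pointwise domination
  have hdom : ∀ (n : ℕ) (x : ℝ) (y : EE d), |x| ≤ n → ‖y‖ ≤ n →
      ∀ p : (ℚ → ℝ) × EE d,
      (Φ x y p).posE ≤ (reg p.1 ((n : ℝ) + (n : ℝ) * ‖p.2‖)).posE ∧
      (-(Φ x y p)).posE ≤ (-(reg p.1 (-(n : ℝ) - (n : ℝ) * ‖p.2‖))).posE := by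
    intro n x y hx hy p
    have habs := abs_real_inner_le_norm y p.2
    have h2 : ‖y‖ * ‖p.2‖ ≤ (n : ℝ) * ‖p.2‖ := mul_le_mul_of_nonneg_right hy (norm_nonneg _)
    have hax := abs_le.mp hx
    have h1 : x + ⟪y, p.2⟫ ≤ (n : ℝ) + (n : ℝ) * ‖p.2‖ := by
      have h5 := (le_abs_self ⟪y, p.2⟫).trans habs
      linarith [hax.2]
    have h1' : -(n : ℝ) - (n : ℝ) * ‖p.2‖ ≤ x + ⟪y, p.2⟫ := by
      have h5 := neg_abs_le ⟪y, p.2⟫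
      have h6 : -((n : ℝ) * ‖p.2‖) ≤ -|⟪y, p.2⟫| := by linarith
      linarith [hax.1]
    exact ⟨posE_mono (reg_mono p.1 h1),
      posE_mono (EReal.neg_le_neg_iff.mpr (reg_mono p.1 h1'))⟩
  refine ⟨fun ω x y => (∫⁻ p, (Φ x y p).posE ∂κ ω).toReal
    - (∫⁻ p, (-(Φ x y p)).posE ∂κ ω).toReal, ?_, ?_, ?_⟩
  · -- (i) continuity and monotonicity
    filter_upwards [hgood1, ae_all_iff.mpr hfin] with ω hS hF
    have haeS : ∀ᵐ p ∂(κ ω), p ∈ goodSet ×ˢ (univ : Set (EE d)) := by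
      have hpm : IsProbabilityMeasure (κ ω) :=
        ProbabilityTheory.IsMarkovKernel.isProbabilityMeasure ω
      have h0 : κ ω ((goodSet ×ˢ (univ : Set (EE d)))ᶜ) = 0 :=
        (prob_compl_eq_zero_iff (measurableSet_goodSet.prod MeasurableSet.univ)).mpr hS
      rw [ae_iff]
      exact h0
    have hfin' : ∀ (n : ℕ) (x : ℝ) (y : EE d), |x| ≤ n → ‖y‖ ≤ n →
        (∫⁻ p, (Φ x y p).posE ∂κ ω ≠ ⊤) ∧ (∫⁻ p, (-(Φ x y p)).posE ∂κ ω ≠ ⊤) := by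
      intro n x y hx hy
      constructor
      · exact (lt_of_le_of_lt (lintegral_mono fun p => (hdom n x y hx hy p).1) (hF n).1).ne
      · exact (lt_of_le_of_lt (lintegral_mono fun p => (hdom n x y hx hy p).2) (hF n).2).ne
    constructor
    · -- continuity
      rw [continuous_iff_seqContinuous]
      intro z q hz
      obtain ⟨n, hn⟩ := exists_nat_gt (max |q.1| ‖q.2‖ + 1)
      have hq1 : |q.1| + 1 < n := lt_of_le_of_lt (by simp) hn
      have hq2 : ‖q.2‖ + 1 < n := lt_of_le_of_lt (by simp) hn
      have hz1 : Tendsto (fun j => (z j).1) atTop (𝓝 q.1) := (continuous_fst.tendsto q).comp hz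
      have hz2 : Tendsto (fun j => (z j).2) atTop (𝓝 q.2) := (continuous_snd.tendsto q).comp hz
      have hev1 : ∀ᶠ j in atTop, |(z j).1| ≤ (n : ℝ) :=
        (hz1.abs.eventually_lt_const (by linarith : |q.1| < (n : ℝ))).mono fun j hj => hj.le
      have hev2 : ∀ᶠ j in atTop, ‖(z j).2‖ ≤ (n : ℝ) :=
        (hz2.norm.eventually_lt_const (by linarith : ‖q.2‖ < (n : ℝ))).mono fun j hj => hj.le
      have hq1' : |q.1| ≤ (n : ℝ) := by linarith
      have hq2' : ‖q.2‖ ≤ (n : ℝ) := by linarith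
      have hT1 : Tendsto (fun j => ∫⁻ p, (Φ (z j).1 (z j).2 p).posE ∂κ ω) atTop
          (𝓝 (∫⁻ p, (Φ q.1 q.2 p).posE ∂κ ω)) := by
        refine tendsto_lintegral_filter_of_dominated_convergence
          (fun p => (reg p.1 ((n : ℝ) + (n : ℝ) * ‖p.2‖)).posE)
          (Eventually.of_forall fun j => measurable_posE.comp (mΦ2 _ _)) ?_ (hF n).1.ne ?_
        · filter_upwards [hev1, hev2] with j h1 h2
          exact Eventually.of_forall fun p => (hdom n _ _ h1 h2 p).1
        · filter_upwards [haeS] with p hp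
          have hg : Monotone p.1 := hp.1.1
          have hrw : ∀ (x : ℝ) (y : EE d),
              (Φ x y p).posE = ENNReal.ofReal (regR p.1 (x + ⟪y, p.2⟫)) := fun x y => by
            simp only [hΦdef]
            rw [reg_eq_coe_regR hg, posE_coe]
          simp only [hrw]
          have harg : Tendsto (fun j => (z j).1 + ⟪(z j).2, p.2⟫) atTop
              (𝓝 (q.1 + ⟪q.2, p.2⟫)) :=
            hz1.add (((continuous_id.inner continuous_const).tendsto q.2).comp hz2)
          exact (ENNReal.continuous_ofReal.tendsto _).comp
            (((goodSet_continuous hp.1).tendsto _).comp harg)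
      have hT2 : Tendsto (fun j => ∫⁻ p, (-(Φ (z j).1 (z j).2 p)).posE ∂κ ω) atTop
          (𝓝 (∫⁻ p, (-(Φ q.1 q.2 p)).posE ∂κ ω)) := by
        refine tendsto_lintegral_filter_of_dominated_convergence
          (fun p => (-(reg p.1 (-(n : ℝ) - (n : ℝ) * ‖p.2‖))).posE)
          (Eventually.of_forall fun j => measurable_posE.comp (mΦ2 _ _).neg) ?_ (hF n).2.ne ?_
        · filter_upwards [hev1, hev2] with j h1 h2
          exact Eventually.of_forall fun p => (hdom n _ _ h1 h2 p).2
        · filter_upwards [haeS] with p hp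
          have hg : Monotone p.1 := hp.1.1
          have hrw : ∀ (x : ℝ) (y : EE d),
              (-(Φ x y p)).posE = ENNReal.ofReal (-(regR p.1 (x + ⟪y, p.2⟫))) := fun x y => by
            simp only [hΦdef]
            rw [reg_eq_coe_regR hg, ← EReal.coe_neg, posE_coe]
          simp only [hrw]
          have harg : Tendsto (fun j => (z j).1 + ⟪(z j).2, p.2⟫) atTop
              (𝓝 (q.1 + ⟪q.2, p.2⟫)) :=
            hz1.add (((continuous_id.inner continuous_const).tendsto q.2).comp hz2)
          exact (ENNReal.continuous_ofReal.tendsto _).comp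
            ((((goodSet_continuous hp.1).neg).tendsto _).comp harg)
      have hfq := hfin' n q.1 q.2 hq1' hq2'
      exact ((ENNReal.tendsto_toReal hfq.1).comp hT1).sub
        ((ENNReal.tendsto_toReal hfq.2).comp hT2)
    · -- monotone in x
      intro y x x' hxx'
      obtain ⟨n, hn⟩ := exists_nat_gt (max (max |x| |x'|) ‖y‖)
      have hfx := hfin' n x y (le_trans (le_max_left _ _ |>.trans (le_max_left _ _)) hn.le) ((le_max_right _ _).trans hn.le)
      have hfx' := hfin' n x' y (le_trans (le_max_right _ _ |>.trans (le_max_left _ _)) hn.le) ((le_max_right _ _).trans hn.le)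
      have hpos : ∫⁻ p, (Φ x y p).posE ∂κ ω ≤ ∫⁻ p, (Φ x' y p).posE ∂κ ω :=
        lintegral_mono fun p => posE_mono (reg_mono p.1 (by linarith))
      have hneg : ∫⁻ p, (-(Φ x' y p)).posE ∂κ ω ≤ ∫⁻ p, (-(Φ x y p)).posE ∂κ ω :=
        lintegral_mono fun p => posE_mono
          (EReal.neg_le_neg_iff.mpr (reg_mono p.1 (by linarith)))
      exact sub_le_sub (ENNReal.toReal_mono hfx'.1 hpos) (ENNReal.toReal_mono hfx.2 hneg)
  · -- (ii) measurability in ω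
    intro x y
    have h2 : Measurable[m] fun ω => ∫⁻ p, (Φ x y p).posE ∂κ ω :=
      Measurable.lintegral_kernel_prod_right' (κ := κ)
        (f := fun q : Ω × ((ℚ → ℝ) × EE d) => (Φ x y q.2).posE)
        ((measurable_posE.comp (mΦ2 x y)).comp (@measurable_snd Ω _ m _))
    have h3 : Measurable[m] fun ω => ∫⁻ p, (-(Φ x y p)).posE ∂κ ω :=
      Measurable.lintegral_kernel_prod_right' (κ := κ)
        (f := fun q : Ω × ((ℚ → ℝ) × EE d) => (-(Φ x y q.2)).posE)
        ((measurable_posE.comp (mΦ2 x y).neg).comp (@measurable_snd Ω _ m _))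
    exact h2.ennreal_toReal.sub h3.ennreal_toReal
  · -- (iii)
    intro x ξ hξ
    have hreg : Measurable[MeasurableSpace.prod m inferInstance]
        (fun q : Ω × ((ℚ → ℝ) × EE d) => Φ x (ξ q.1) q.2) := by
      rw [hΦdef]
      exact @measurable_reg _ (MeasurableSpace.prod m inferInstance) _ _ (measurable_fst.comp (@measurable_snd Ω _ m _))
        (measurable_const.add ((hξ.comp (@measurable_fst Ω _ m _)).inner
          (measurable_snd.comp (@measurable_snd Ω _ m _))))
    have hwpos : Measurable[MeasurableSpace.prod m inferInstance]
        (Function.uncurry fun ω p => (Φ x (ξ ω) p).posE) :=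
      measurable_posE.comp hreg
    have hwneg : Measurable[MeasurableSpace.prod m inferInstance]
        (Function.uncurry fun ω p => (-(Φ x (ξ ω) p)).posE) :=
      measurable_posE.comp hreg.neg
    have hLP := masterL μ m hm hW (fun ω p => (Φ x (ξ ω) p).posE) hwpos
    have hLN := masterL μ m hm hW (fun ω p => (-(Φ x (ξ ω) p)).posE) hwneg
    have hcongP : (fun ω => (Φ x (ξ ω) (W ω)).posE) =ᵐ[μ]
        fun ω => (((V ω (x + ⟪ξ ω, Y ω⟫) : ℝ) : EReal)).posE := by
      filter_upwards [hV1] with ω hω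
      show (reg (fun r : ℚ => V ω (r : ℝ)) (x + ⟪ξ ω, Y ω⟫)).posE = _
      rw [reg_restrict hω.1 hω.2]
    have hcongN : (fun ω => (-(Φ x (ξ ω) (W ω))).posE) =ᵐ[μ]
        fun ω => (-((V ω (x + ⟪ξ ω, Y ω⟫) : ℝ) : EReal)).posE := by
      filter_upwards [hV1] with ω hω
      show (-(reg (fun r : ℚ => V ω (r : ℝ)) (x + ⟪ξ ω, Y ω⟫))).posE = _
      rw [reg_restrict hω.1 hω.2]
    have hPP : gcePos μ m (fun ω' => ((V ω' (x + ⟪ξ ω', Y ω'⟫) : ℝ) : EReal)) =ᵐ[μ]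
        fun ω => ∫⁻ p, (Φ x (ξ ω) p).posE ∂κ ω :=
      (gceTop_congr m hcongP.symm).trans hLP
    have hNN : gceNeg μ m (fun ω' => ((V ω' (x + ⟪ξ ω', Y ω'⟫) : ℝ) : EReal)) =ᵐ[μ]
        fun ω => ∫⁻ p, (-(Φ x (ξ ω) p)).posE ∂κ ω :=
      (gceTop_congr m hcongN.symm).trans hLN
    filter_upwards [hPP, hNN, ae_all_iff.mpr hfin] with ω ePP eNN hfn
    obtain ⟨n, hn⟩ := exists_nat_gt (max |x| ‖ξ ω‖)
    have hx : |x| ≤ (n : ℝ) := (le_max_left _ _).trans hn.le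
    have hy : ‖ξ ω‖ ≤ (n : ℝ) := (le_max_right _ _).trans hn.le
    have finP : ∫⁻ p, (Φ x (ξ ω) p).posE ∂κ ω < ⊤ :=
      lt_of_le_of_lt (lintegral_mono fun p => (hdom n x (ξ ω) hx hy p).1) (hfn n).1
    have finN : ∫⁻ p, (-(Φ x (ξ ω) p)).posE ∂κ ω < ⊤ :=
      lt_of_le_of_lt (lintegral_mono fun p => (hdom n x (ξ ω) hx hy p).2) (hfn n).2
    refine ⟨by rw [ePP]; exact finP, by rw [eNN]; exact finN, ?_⟩
    have huE : gceE μ m (fun ω' => ((V ω' (x + ⟪ξ ω', Y ω'⟫) : ℝ) : EReal)) ω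
        = ((gcePos μ m (fun ω' => ((V ω' (x + ⟪ξ ω', Y ω'⟫) : ℝ) : EReal)) ω : ℝ≥0∞) : EReal)
          - ((gceNeg μ m (fun ω' => ((V ω' (x + ⟪ξ ω', Y ω'⟫) : ℝ) : EReal)) ω : ℝ≥0∞) : EReal) :=
      rfl
    rw [huE, ePP, eNN, coe_ennreal_eq finP.ne, coe_ennreal_eq finN.ne, ← EReal.coe_sub]


end NonConcave
end
end

section
/- In the one-step setting, under Assumptions (D), (QNA), (V1), (V−), (V+), (V2) and (V3), define A(ω,x) := sup_{y∈ℚ^d} G(ω,x,y) and, for fixed x_0<x_1, A^K(ω,x) := sup_{y∈ℚ^d, |y|≤K(ω,x_0,x_1)} G(ω,x,y) for x∈[x_0,x_1], where K(ω,x_0,x_1) is the 𝓗-measurable bound on optimal strategies. Then on a set of full measure: (i) x ↦ A^K(ω,x) is nondecreasing and continuous on [x_0,x_1]; (ii) v(ω,x) = A^K(ω,x) = A(ω,x) for all x∈[x_0,x_1]; indeed P(A(·,x) = A^K(·,x) for all x∈[x_0,x_1]) = 1. -/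
open MeasureTheory Filter Set
open scoped ENNReal NNReal RealInnerProductSpace

noncomputable section

namespace NonConcave

variable {Ω : Type*}

/-- `A(ω,x) := sup_{y ∈ ℚ^d} G(ω,x,y)` -/
noncomputable def Afun {d : ℕ} (G : Ω → ℝ → EE d → ℝ) (ω : Ω) (x : ℝ) : EReal :=
  ⨆ q : Fin d → ℚ, ((G ω x (ratToE q) : ℝ) : EReal)

/-- `A^K(ω,x) := sup_{y ∈ ℚ^d, |y| ≤ K(ω)} G(ω,x,y)` -/
noncomputable def AKfun {d : ℕ} (G : Ω → ℝ → EE d → ℝ) (K : Ω → ℝ) (ω : Ω) (x : ℝ) : EReal :=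
  ⨆ q : {q : Fin d → ℚ // ‖ratToE q‖ ≤ K ω}, ((G ω x (ratToE q.1) : ℝ) : EReal)


lemma ratToE_zero {d : ℕ} : ratToE (d := d) (fun _ => 0) = 0 := by
  ext i; simp only [ratToE, Rat.cast_zero]; rfl

lemma denseRange_ratToE {d : ℕ} : DenseRange (ratToE (d := d)) := by
  intro y
  rw [Metric.mem_closure_iff]
  intro ε hε
  have hδ : (0:ℝ) < ε / (d + 1) := by positivity
  have h : ∀ i : Fin d, ∃ q : ℚ, |y i - (q:ℝ)| < ε / (d+1) := fun i => exists_rat_near (y i) hδ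
  choose q hq using h
  refine ⟨ratToE q, mem_range_self _, ?_⟩
  rw [EuclideanSpace.dist_eq]
  have hb : ∀ i : Fin d, dist (y i) (ratToE q i) ^ 2 < (ε/(d+1))^2 := by
    intro i
    have h0 : dist (y i) (ratToE q i) = |y i - (q i : ℝ)| := by
      simp [Real.dist_eq]; rfl
    rw [h0]
    have : (0:ℝ) ≤ |y i - (q i:ℝ)| := abs_nonneg _
    nlinarith [hq i]
  have hsum : ∑ i, dist (y i) (ratToE q i) ^ 2 ≤ (d:ℝ) * (ε/(d+1))^2 := by
    calc ∑ i, dist (y i) (ratToE q i) ^ 2 ≤ ∑ _i : Fin d, (ε/(d+1))^2 :=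
          Finset.sum_le_sum fun i _ => (hb i).le
      _ = (d:ℝ) * (ε/(d+1))^2 := by simp [Finset.sum_const, mul_comm]
  calc Real.sqrt (∑ i, dist (y i) (ratToE q i) ^ 2) ≤ Real.sqrt ((d:ℝ) * (ε/(d+1))^2) :=
        Real.sqrt_le_sqrt hsum
    _ < ε := by
        rw [show (d:ℝ) * (ε/(d+1))^2 = ((ε/(d+1))*Real.sqrt d)^2 by
              rw [mul_pow, Real.sq_sqrt (by positivity)]; ring]
        rw [Real.sqrt_sq (by positivity)]
        have h1 : Real.sqrt d < d + 1 := by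
          have h2 : Real.sqrt d < Real.sqrt ((d+1)^2) :=
            Real.sqrt_lt_sqrt (Nat.cast_nonneg d) (by nlinarith [Nat.cast_nonneg (α := ℝ) d])
          rwa [Real.sqrt_sq (by positivity)] at h2
        calc ε/(d+1) * Real.sqrt d < ε/(d+1) * (d+1) := by
              apply mul_lt_mul_of_pos_left h1 hδ
          _ = ε := by field_simp

lemma rat_ball_dense {d : ℕ} {K : ℝ} (hK : 0 < K) {y : EE d} (hy : ‖y‖ ≤ K)
    {ε : ℝ} (hε : 0 < ε) : ∃ q : Fin d → ℚ, ‖ratToE q‖ ≤ K ∧ dist (ratToE q) y < ε := by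
  set c : ℝ := min (1/2) (ε / (2*K + 2)) with hc
  have hc0 : 0 < c := lt_min (by norm_num) (by positivity)
  have hc1 : c ≤ 1/2 := min_le_left _ _
  set y' : EE d := (1 - c) • y with hy'
  have hny' : ‖y'‖ = (1 - c) * ‖y‖ := by
    rw [hy', norm_smul, Real.norm_eq_abs, abs_of_nonneg (by linarith)]
  have hylt : ‖y'‖ < K := by
    rw [hny']
    calc (1-c) * ‖y‖ ≤ (1-c) * K := by nlinarith [norm_nonneg y]
      _ < K := by nlinarith
  have hdyy' : dist y' y < ε/2 := by
    rw [dist_eq_norm, hy']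
    have h9 : (1 - c) • y - y = (-c) • y := by
      rw [sub_smul, one_smul, neg_smul]; abel
    rw [h9, norm_smul, Real.norm_eq_abs, abs_of_nonpos (by linarith), neg_neg]
    have hce : c ≤ ε / (2*K+2) := min_le_right _ _
    calc c * ‖y‖ ≤ (ε / (2*K+2)) * K := by nlinarith [norm_nonneg y]
      _ < ε/2 := by rw [div_mul_eq_mul_div, div_lt_iff₀ (by linarith)]; nlinarith
  have hδ : 0 < min (ε/2) (K - ‖y'‖) := lt_min (by positivity) (by linarith)
  obtain ⟨z, ⟨q, rfl⟩, hz⟩ := Metric.mem_closure_iff.1 (denseRange_ratToE y') _ hδ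
  have hz1 : dist (ratToE q) y' < ε/2 := (dist_comm y' _ ▸ hz).trans_le (min_le_left _ _)
  have hz2 : dist (ratToE q) y' < K - ‖y'‖ := (dist_comm y' _ ▸ hz).trans_le (min_le_right _ _)
  refine ⟨q, ?_, ?_⟩
  · have h7 : ‖ratToE q‖ - ‖y'‖ ≤ dist (ratToE q) y' := by
      rw [dist_eq_norm]; exact norm_sub_norm_le _ _
    linarith
  · calc dist (ratToE q) y ≤ dist (ratToE q) y' + dist y' y := dist_triangle _ _ _
      _ < ε := by linarith

lemma coe_ciSup_EReal {ι : Sort*} [Nonempty ι] (f : ι → ℝ) (hb : BddAbove (range f)) :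
    (((⨆ i, f i : ℝ) : ℝ) : EReal) = ⨆ i, ((f i : ℝ) : EReal) := by
  apply le_antisymm
  · by_contra h
    push_neg at h
    obtain ⟨c, hc1, hc2⟩ := EReal.exists_between_coe_real h
    have hcr : c < (⨆ i, f i : ℝ) := by exact_mod_cast hc2
    obtain ⟨i, hi⟩ := exists_lt_of_lt_ciSup hcr
    exact absurd (le_iSup (fun i => ((f i : ℝ) : EReal)) i) (by
      intro hle
      exact absurd (lt_of_lt_of_le (by exact_mod_cast hi : (c:EReal) < (f i : EReal)) hle)
        (not_lt.2 hc1.le))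
  · exact iSup_le fun i => by exact_mod_cast le_ciSup hb i

/-- auxiliary: the max of `G ω x ·` over the closed ball of radius `K ω`. -/
noncomputable def Mfun {d : ℕ} (G : Ω → ℝ → EE d → ℝ) (K : Ω → ℝ) (ω : Ω) (x : ℝ) : ℝ :=
  sSup (G ω x '' Metric.closedBall 0 (K ω))

lemma le_Mfun {d : ℕ} (G : Ω → ℝ → EE d → ℝ) (K : Ω → ℝ) (ω : Ω)
    (hc : Continuous fun p : ℝ × EE d => G ω p.1 p.2) (x : ℝ) {y : EE d}
    (hy : ‖y‖ ≤ K ω) : G ω x y ≤ Mfun G K ω x := by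
  have hGx : Continuous (G ω x) := hc.comp (continuous_const.prodMk continuous_id)
  exact le_csSup ((isCompact_closedBall _ _).bddAbove_image hGx.continuousOn)
    (mem_image_of_mem _ (mem_closedBall_zero_iff.2 hy))

lemma Mfun_continuous {d : ℕ} (G : Ω → ℝ → EE d → ℝ) (K : Ω → ℝ) (ω : Ω)
    (hc : Continuous fun p : ℝ × EE d => G ω p.1 p.2) : Continuous (Mfun G K ω) :=
  IsCompact.continuous_sSup (isCompact_closedBall _ _) hc

lemma AK_eq_M {d : ℕ} (G : Ω → ℝ → EE d → ℝ) (K : Ω → ℝ) (ω : Ω)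
    (hc : Continuous fun p : ℝ × EE d => G ω p.1 p.2) (hKω : 0 < K ω) (x : ℝ) :
    AKfun G K ω x = ((Mfun G K ω x : ℝ) : EReal) := by
  have hne : Nonempty {q : Fin d → ℚ // ‖ratToE q‖ ≤ K ω} :=
    ⟨⟨fun _ => 0, by rw [ratToE_zero, norm_zero]; exact hKω.le⟩⟩
  have hGx : Continuous (G ω x) := hc.comp (continuous_const.prodMk continuous_id)
  have hcp : IsCompact (Metric.closedBall (0 : EE d) (K ω)) := isCompact_closedBall _ _
  have hbdd : BddAbove (G ω x '' Metric.closedBall 0 (K ω)) :=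
    hcp.bddAbove_image hGx.continuousOn
  have hsub : range (fun q : {q : Fin d → ℚ // ‖ratToE q‖ ≤ K ω} => G ω x (ratToE q.1))
      ⊆ G ω x '' Metric.closedBall 0 (K ω) := by
    rintro _ ⟨q, rfl⟩
    exact mem_image_of_mem _ (mem_closedBall_zero_iff.2 q.2)
  have hbr : BddAbove (range fun q : {q : Fin d → ℚ // ‖ratToE q‖ ≤ K ω} =>
      G ω x (ratToE q.1)) := hbdd.mono hsub
  rw [AKfun, ← coe_ciSup_EReal _ hbr]
  norm_cast
  apply le_antisymm
  · exact ciSup_le fun q => le_csSup hbdd (mem_image_of_mem _ (mem_closedBall_zero_iff.2 q.2))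
  · apply csSup_le (⟨_, mem_image_of_mem _ (Metric.mem_closedBall_self hKω.le)⟩)
    rintro a ⟨y, hy, rfl⟩
    apply le_of_forall_pos_le_add
    intro ε hε
    obtain ⟨δ, hδ0, hδ⟩ := Metric.continuousAt_iff.1 (hGx.continuousAt (x := y)) ε hε
    obtain ⟨q, hq1, hq2⟩ := rat_ball_dense hKω (mem_closedBall_zero_iff.1 hy) hδ0
    have h3 := hδ hq2
    rw [Real.dist_eq] at h3
    have h2 : G ω x (ratToE q) ≤ ⨆ q : {q : Fin d → ℚ // ‖ratToE q‖ ≤ K ω}, G ω x (ratToE q.1) :=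
      le_ciSup hbr ⟨q, hq1⟩
    have h4 := abs_lt.1 h3
    linarith [h4.1]

/-- Lemma `candymaxiessup`: on a set of full measure, `A^K(ω,·)` is nondecreasing
and continuous on `[x₀,x₁]`, and `v(ω,x) = A^K(ω,x) = A(ω,x)` there; moreover
`P(A(·,x) = A^K(·,x) for all x ∈ [x₀,x₁]) = 1`. -/
theorem stmt_11
    {d : ℕ} (m : MeasurableSpace Ω) {m0 : MeasurableSpace Ω} (μ : Measure Ω) [IsProbabilityMeasure μ]
    (hm : m ≤ m0)
    (hnull : ∀ s : Set Ω, μ s = 0 → MeasurableSet[m] s)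
    (Y : Ω → EE d) (hY : Measurable Y)
    -- Assumption (D)
    (ν : Ω → Measure (EE d)) (hν : IsCondDistrib μ m Y ν)
    (Dset : Ω → Set (EE d))
    (hDmeas : MeasurableSet[m.prod inferInstance] {p : Ω × EE d | p.2 ∈ Dset p.1})
    (hDaff : ∀ᵐ ω ∂μ, IsSmallestAffine (ν ω) (Dset ω) ∧
      ∃ p : Submodule ℝ (EE d), (p : Set (EE d)) = Dset ω)
    -- Assumption (QNA)
    (α β : Ω → ℝ) (hα : Measurable[m] α) (hβ : Measurable[m] β)
    (hαβpos : ∀ᵐ ω ∂μ, 0 < α ω ∧ 0 < β ω)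
    (hQNA : ∀ ξ : Ω → EE d, Measurable[m] ξ → (∀ᵐ ω ∂μ, ξ ω ∈ Dset ω) →
      ∀ᵐ ω ∂μ, β ω ≤ cprob μ m {ω' | ⟪ξ ω', Y ω'⟫ ≤ -(α ω') * ‖ξ ω'‖} ω)
    -- Assumption (V1)
    (V : Ω → ℝ → ℝ)
    (hV1 : ∀ᵐ ω ∂μ, Monotone (V ω) ∧ Continuous (V ω))
    (hVmeas : ∀ x : ℝ, Measurable fun ω => V ω x)
    -- Assumptions (V−) and (V+)
    (hVminus : ∀ x y : ℝ, ∀ᵐ ω ∂μ,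
      gceNeg μ m (fun ω' => ((V ω' (x - |y| * ‖Y ω'‖) : ℝ) : EReal)) ω < ⊤)
    (hVplus : ∀ x y : ℝ, ∀ᵐ ω ∂μ,
      gcePos μ m (fun ω' => ((V ω' (x + |y| * ‖Y ω'‖) : ℝ) : EReal)) ω < ⊤)
    -- Assumption (V2)
    (C gb gl : ℝ) (hC : 0 < C) (hgb : 0 < gb) (hgbl : gb < gl)
    (hV2 : ∀ᵐ ω ∂μ, ∀ x lam : ℝ, 1 ≤ lam →
      V ω (lam * x) ≤ lam ^ gb * V ω x + C * lam ^ gb ∧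
      V ω (lam * x) ≤ lam ^ gl * V ω x + C * lam ^ gl)
    -- Assumption (V3)
    (N : Ω → ℝ) (hN : Measurable[m] N) (hNnonneg : ∀ ω, 0 ≤ N ω)
    (hV3 : ∀ᵐ ω ∂μ, 1 - β ω / 2 ≤ cprob μ m {ω' | V ω' (-(N ω')) < -(2 * C) / β ω' - 1} ω)
    -- the value function `v(ω,x) := ess sup_{ξ∈Ξ} E(V(x+ξ·Y)|𝓗)(ω)`
    (v : ℝ → Ω → EReal)
    (hv : ∀ x : ℝ, IsEssSup μ
      (fun ξ : {ξ : Ω → EE d // Measurable[m] ξ} =>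
        gceE μ m (fun ω => ((V ω (x + ⟪ξ.1 ω, Y ω⟫) : ℝ) : EReal)))
      (v x))
    -- `G` is the jointly continuous version of `(x,y) ↦ E(V(x+y·Y)|𝓗)`
    (G : Ω → ℝ → EE d → ℝ)
    (hGcont : ∀ᵐ ω ∂μ, Continuous (fun p : ℝ × EE d => G ω p.1 p.2) ∧
      ∀ y : EE d, Monotone fun x => G ω x y)
    (hGmeas : ∀ (x : ℝ) (y : EE d), Measurable[m] fun ω => G ω x y)
    (hGver : ∀ (x : ℝ) (ξ : Ω → EE d), Measurable[m] ξ →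
      ∀ᵐ ω ∂μ,
        gcePos μ m (fun ω' => ((V ω' (x + ⟪ξ ω', Y ω'⟫) : ℝ) : EReal)) ω < ⊤ ∧
        gceNeg μ m (fun ω' => ((V ω' (x + ⟪ξ ω', Y ω'⟫) : ℝ) : EReal)) ω < ⊤ ∧
        gceE μ m (fun ω' => ((V ω' (x + ⟪ξ ω', Y ω'⟫) : ℝ) : EReal)) ω
          = ((G ω x (ξ ω) : ℝ) : EReal))
    (x₀ x₁ : ℝ) (hx : x₀ < x₁)
    -- `K` is the `𝓗`-measurable bound on optimal strategies on `[x₀,x₁]`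
    (K : Ω → ℝ) (hK : Measurable[m] K) (hKpos : ∀ᵐ ω ∂μ, 0 < K ω)
    (hKbound : ∀ x : ℝ, x₀ ≤ x → x ≤ x₁ →
      IsEssSup μ
        (fun ξ : {ξ : Ω → EE d // Measurable[m] ξ ∧ ∀ᵐ ω ∂μ, ‖ξ ω‖ ≤ K ω} =>
          gceE μ m (fun ω => ((V ω (x + ⟪ξ.1 ω, Y ω⟫) : ℝ) : EReal)))
        (v x)) :
    (∀ᵐ ω ∂μ, MonotoneOn (AKfun G K ω) (Set.Icc x₀ x₁) ∧
      ContinuousOn (AKfun G K ω) (Set.Icc x₀ x₁)) ∧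
    (∀ x ∈ Set.Icc x₀ x₁, ∀ᵐ ω ∂μ,
      v x ω = AKfun G K ω x ∧ AKfun G K ω x = Afun G ω x) ∧
    (∀ᵐ ω ∂μ, ∀ x ∈ Set.Icc x₀ x₁, Afun G ω x = AKfun G K ω x)  := by
  classical
  -- pointwise: AKfun ≤ Afun
  have hKA : ∀ (ω : Ω) (x : ℝ), AKfun G K ω x ≤ Afun G ω x := fun ω x =>
    iSup_le fun q => le_iSup (fun q : Fin d → ℚ => ((G ω x (ratToE q) : ℝ) : EReal)) q.1
  -- part (ii)
  have key : ∀ x ∈ Set.Icc x₀ x₁, ∀ᵐ ω ∂μ,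
      v x ω = AKfun G K ω x ∧ AKfun G K ω x = Afun G ω x := by
    intro x hxmem
    have hA : ∀ᵐ ω ∂μ, ∀ q : Fin d → ℚ, ((G ω x (ratToE q) : ℝ) : EReal) ≤ v x ω := by
      rw [ae_all_iff]
      intro q
      have h1 := (hv x).1 ⟨fun _ => ratToE q, measurable_const⟩
      have h2 := hGver x (fun _ => ratToE q) measurable_const
      filter_upwards [h1, h2] with ω h1 h2
      rw [← h2.2.2]; exact h1
    have hAfun_le : ∀ᵐ ω ∂μ, Afun G ω x ≤ v x ω := by
      filter_upwards [hA] with ω h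
      exact iSup_le fun q => h q
    have hB : ∀ᵐ ω ∂μ, v x ω ≤ AKfun G K ω x := by
      apply (hKbound x hxmem.1 hxmem.2).2 (fun ω => AKfun G K ω x)
      rintro ⟨ξ, hξm, hξK⟩
      have h2 := hGver x ξ hξm
      filter_upwards [h2, hξK, hGcont, hKpos] with ω h2 hξK hGc hKp
      rw [h2.2.2, AK_eq_M G K ω hGc.1 hKp x]
      exact_mod_cast le_Mfun G K ω hGc.1 x hξK
    filter_upwards [hAfun_le, hB] with ω h1 h2
    exact ⟨le_antisymm h2 ((hKA ω x).trans h1), le_antisymm (hKA ω x) (h1.trans h2)⟩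
  refine ⟨?_, key, ?_⟩
  · -- part (i)
    filter_upwards [hGcont, hKpos] with ω hGc hKp
    constructor
    · intro a _ b _ hab
      exact iSup_mono fun q => EReal.coe_le_coe_iff.2 (hGc.2 (ratToE q.1) hab)
    · have heq : AKfun G K ω = fun x => ((Mfun G K ω x : ℝ) : EReal) :=
        funext fun x => AK_eq_M G K ω hGc.1 hKp x
      rw [heq]
      exact (continuous_coe_real_ereal.comp (Mfun_continuous G K ω hGc.1)).continuousOn
  · -- part (iii)
    have hrat : ∀ᵐ ω ∂μ, ∀ r : ℚ, (r:ℝ) ∈ Set.Icc x₀ x₁ →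
        AKfun G K ω r = Afun G ω r := by
      rw [ae_all_iff]
      intro r
      by_cases hr : (r:ℝ) ∈ Set.Icc x₀ x₁
      · filter_upwards [key r hr] with ω h _
        exact h.2
      · filter_upwards with ω h
        exact absurd h hr
    have hx1 := key x₁ ⟨hx.le, le_refl _⟩
    filter_upwards [hrat, hx1, hGcont, hKpos] with ω hrat hx1 hGc hKp
    intro x hxm
    by_cases hxx : x = x₁
    · subst hxx
      exact hx1.2.symm
    have hxlt : x < x₁ := lt_of_le_of_ne hxm.2 hxx
    refine le_antisymm ?_ (hKA ω x)
    have hseq : ∀ n : ℕ, ∃ r : ℚ, x < (r:ℝ) ∧ (r:ℝ) < min x₁ (x + 1/(n+1)) := by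
      intro n
      apply exists_rat_btwn
      apply lt_min hxlt
      have : (0:ℝ) < 1/(n+1) := by positivity
      linarith
    choose r hr1 hr2 using hseq
    have hrIcc : ∀ n, ((r n : ℝ)) ∈ Set.Icc x₀ x₁ := fun n =>
      ⟨hxm.1.trans (hr1 n).le, ((hr2 n).trans_le (min_le_left _ _)).le⟩
    have htend : Tendsto (fun n : ℕ => ((r n : ℝ))) atTop (nhds x) := by
      have hup : Tendsto (fun n : ℕ => x + 1/((n:ℝ)+1)) atTop (nhds x) := by
        have : Tendsto (fun n : ℕ => 1 / ((n:ℝ) + 1)) atTop (nhds 0) :=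
          tendsto_one_div_add_atTop_nhds_zero_nat
        have h := tendsto_const_nhds (x := x) (f := atTop (α := ℕ)).add this
        simpa using h
      exact tendsto_of_tendsto_of_tendsto_of_le_of_le tendsto_const_nhds hup
        (fun n => (hr1 n).le) (fun n => ((hr2 n).trans_le (min_le_right _ _)).le)
    have hMt : Tendsto (fun n => AKfun G K ω (r n)) atTop (nhds (AKfun G K ω x)) := by
      have heq : ∀ z : ℝ, AKfun G K ω z = ((Mfun G K ω z : ℝ) : EReal) :=
        AK_eq_M G K ω hGc.1 hKp
      simp only [heq]
      exact (continuous_coe_real_ereal.tendsto _).comp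
        (((Mfun_continuous G K ω hGc.1).tendsto x).comp htend)
    have hle : ∀ n, Afun G ω x ≤ AKfun G K ω (r n) := by
      intro n
      have hmono : Afun G ω x ≤ Afun G ω (r n) :=
        iSup_mono fun q => EReal.coe_le_coe_iff.2 (hGc.2 (ratToE q) (hr1 n).le)
      exact hmono.trans (hrat (r n) (hrIcc n)).symm.le
    exact ge_of_tendsto' hMt hle


end NonConcave
end
end

section
/- Let F:Ω×ℝ^d→ℝ be such that for almost all ω, y ↦ F(ω,y) is continuous, and for each y∈ℝ^d, ω ↦ F(ω,y) is 𝓗-measurable. Let K be an 𝓗-measurable random variable with K>0. Then, almost surely, sup_{y∈ℝ^d, |y|≤K(ω)} F(ω,y) = ess sup_{ξ∈Ξ, |ξ|≤K} F(ω,ξ(ω)), where the essential supremum is taken over all 𝓗-measurable ℝ^d-valued random variables ξ with |ξ|≤K a.s. -/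
/-!
Only countably many selections are needed. For `q` in a dense sequence, the selection equal to
`q` where `‖q‖ < K` and to `0` elsewhere is admissible, so off a single null set every upper
bound `h` satisfies `F(ω, q) ≤ h(ω)` whenever `‖q‖ < K(ω)`. Since `K(ω) > 0`, the closed ball of
radius `K(ω)` is the closure of the open one, and continuity of `F(ω, ·)` carries the bound to
all of it.
-/

open MeasureTheory Filter Set
open scoped ENNReal NNReal RealInnerProductSpace

noncomputable section

namespace NonConcave

variable {Ω : Type*}

theorem le_on_closedBall_of_le_on_dense_inter_ball {E α : Type*} [NormedAddCommGroup E]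
    [NormedSpace ℝ E] [TopologicalSpace α] [Preorder α] [ClosedIicTopology α]
    {D : Set E} (hD : Dense D) {f : E → α} (hf : Continuous f) {x : E} {r : ℝ} (hr : r ≠ 0)
    {c : α} (h : ∀ y ∈ D ∩ Metric.ball x r, f y ≤ c) :
    ∀ y ∈ Metric.closedBall x r, f y ≤ c := by
  have hsub : Metric.ball x r ⊆ closure (Metric.ball x r ∩ D) :=
    hD.open_subset_closure_inter Metric.isOpen_ball
  have hclosed : IsClosed (f ⁻¹' Iic c) := isClosed_Iic.preimage hf
  rw [← closure_ball x hr]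
  refine (closure_minimal hsub isClosed_closure).trans (hclosed.closure_subset_iff.2 ?_)
  exact fun y hy => h y ⟨hy.2, hy.1⟩

def ballSelection {E : Type*} [NormedAddCommGroup E] (K : Ω → ℝ) (q : E) : Ω → E :=
  {ω | ‖q‖ < K ω}.indicator fun _ => q

section ballSelection

variable {E : Type*} [NormedAddCommGroup E] {K : Ω → ℝ}

theorem ballSelection_of_lt (q : E) {ω : Ω} (h : ‖q‖ < K ω) : ballSelection K q ω = q :=
  indicator_of_mem (s := {ω | ‖q‖ < K ω}) h _

theorem norm_ballSelection_le (q : E) {ω : Ω} (hK : 0 ≤ K ω) : ‖ballSelection K q ω‖ ≤ K ω := by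
  by_cases h : ‖q‖ < K ω
  · rw [ballSelection_of_lt q h]
    exact h.le
  · rwa [ballSelection, indicator_of_notMem (s := {ω | ‖q‖ < K ω}) h, norm_zero]

theorem measurable_ballSelection [MeasurableSpace E] {m : MeasurableSpace Ω}
    (hK : Measurable[m] K) (q : E) : Measurable[m] (ballSelection K q) :=
  measurable_const.indicator (measurableSet_lt measurable_const hK)

end ballSelection

theorem stmt_16_general {d : ℕ} {m0 : MeasurableSpace Ω} (μ : Measure Ω)
    (m : MeasurableSpace Ω)
    (F : Ω → EE d → ℝ)
    (hFcont : ∀ᵐ ω ∂μ, Continuous (F ω))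
    (K : Ω → ℝ) (hK : Measurable[m] K) (hKpos : ∀ᵐ ω ∂μ, 0 < K ω) :
    IsEssSup μ
      (fun ξ : {ξ : Ω → EE d // Measurable[m] ξ ∧ ∀ᵐ ω ∂μ, ‖ξ ω‖ ≤ K ω} =>
        fun ω => ((F ω (ξ.1 ω) : ℝ) : EReal))
      (fun ω => ⨆ y : {y : EE d // ‖y‖ ≤ K ω}, ((F ω y.1 : ℝ) : EReal)) := by
  refine ⟨fun ξ => ?_, fun h hh => ?_⟩
  · filter_upwards [ξ.2.2] with ω hω
    exact le_iSup (fun y : {y : EE d // ‖y‖ ≤ K ω} => ((F ω y.1 : ℝ) : EReal)) ⟨ξ.1 ω, hω⟩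
  · set q := TopologicalSpace.denseSeq (EE d)
    have hsel : ∀ n, ∀ᵐ ω ∂μ, ‖q n‖ < K ω → ((F ω (q n) : ℝ) : EReal) ≤ h ω := fun n => by
      have hnorm : ∀ᵐ ω ∂μ, ‖ballSelection K (q n) ω‖ ≤ K ω := by
        filter_upwards [hKpos] with ω hKω using norm_ballSelection_le _ hKω.le
      filter_upwards [hh ⟨_, measurable_ballSelection hK (q n), hnorm⟩] with ω hω hlt
      rwa [ballSelection_of_lt _ hlt] at hω
    filter_upwards [ae_all_iff.2 hsel, hFcont, hKpos] with ω hω hcont hKω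
    refine iSup_le fun y => ?_
    refine le_on_closedBall_of_le_on_dense_inter_ball (TopologicalSpace.denseRange_denseSeq _)
      (continuous_coe_real_ereal.comp hcont) hKω.ne' ?_ y.1 (mem_closedBall_zero_iff.2 y.2)
    rintro _ ⟨⟨n, rfl⟩, hn⟩
    exact hω n (mem_ball_zero_iff.1 hn)

/-- measurable-selection claim in Lemma `candymaxiessup`: for `F(ω,y)` continuous
in `y` (a.s.) and `𝓗`-measurable in `ω`, and an `𝓗`-measurable `K > 0`, the pointwise supremum
`sup_{|y| ≤ K(ω)} F(ω,y)` is an essential supremum of the family `F(·, ξ(·))`, `ξ ∈ Ξ`,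
`|ξ| ≤ K` a.s. -/
theorem stmt_16 {d : ℕ} {m0 : MeasurableSpace Ω} (μ : Measure Ω) [IsProbabilityMeasure μ]
    (m : MeasurableSpace Ω) (hm : m ≤ m0)
    (hnull : ∀ s : Set Ω, μ s = 0 → MeasurableSet[m] s)
    (F : Ω → EE d → ℝ)
    (hFcont : ∀ᵐ ω ∂μ, Continuous (F ω))
    (hFmeas : ∀ y : EE d, Measurable[m] fun ω => F ω y)
    (K : Ω → ℝ) (hK : Measurable[m] K) (hKpos : ∀ᵐ ω ∂μ, 0 < K ω) :
    IsEssSup μ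
      (fun ξ : {ξ : Ω → EE d // Measurable[m] ξ ∧ ∀ᵐ ω ∂μ, ‖ξ ω‖ ≤ K ω} =>
        fun ω => ((F ω (ξ.1 ω) : ℝ) : EReal))
      (fun ω => ⨆ y : {y : EE d // ‖y‖ ≤ K ω}, ((F ω y.1 : ℝ) : EReal)) :=
  stmt_16_general (m0 := m0) μ m F hFcont K hK hKpos

end NonConcave
end
end
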